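/- Let f : ℝⁿ → ℝ be a coercive polynomial function and fix parameters β ∈ (−1, 1), γ ∈ ℝ, δ > 0. For every bounded set X₀ ⊆ ℝⁿ and every ε > 0 there exist ᾱ > 0 and Δ > 0 such that for every step size α ∈ (0, ᾱ] and every gradient-method-with-momentum trajectory (x_k)_{k≥−1} of f with step size α and parameters β, γ, δ satisfying x₀ ∈ X₀, one has f(x_k) ≤ Δ for all k ∈ ℕ, and moreover there exist a critical value f* of f and k₀ ∈ ℕ such that |f(x_k) − f*| ≤ ε for all k ≥ k₀. (This is the paper's Theorem on stability of function values instantiated with a polynomial objective and the subgradient method with momentum, which for differentiable f is the gradient method with momentum.) -/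

import Mathlib

open Filter Metric Topology

local notation "⟪" x ", " y "⟫" => @inner ℝ _ _ x y

theorem mv_contDiff {n : ℕ} (p : MvPolynomial (Fin n) ℝ) :
    ContDiff ℝ (⊤ : ℕ∞) (fun x : EuclideanSpace ℝ (Fin n) => MvPolynomial.eval x p) := by
  induction p using MvPolynomial.induction_on with
  | C a => simpa using contDiff_const (c := a)
  | add p q hp hq => simpa using hp.add hq
  | mul_X p i hp =>
      have hi : ContDiff ℝ (⊤ : ℕ∞) (fun x : EuclideanSpace ℝ (Fin n) => x i) :=
        (EuclideanSpace.proj (𝕜 := ℝ) i).contDiff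
      simpa using hp.mul hi

theorem grad_contDiff {n : ℕ} (f : EuclideanSpace ℝ (Fin n) → ℝ) (hf : ContDiff ℝ (⊤ : ℕ∞) f) :
    ContDiff ℝ (⊤ : ℕ∞) (gradient f) := by
  have h1 : ContDiff ℝ (⊤ : ℕ∞) (fderiv ℝ f) := hf.fderiv_right (mod_cast le_top)
  exact ((InnerProductSpace.toDual ℝ (EuclideanSpace ℝ (Fin n))).symm.contDiff).comp h1

theorem grad_lip {n : ℕ} (f : EuclideanSpace ℝ (Fin n) → ℝ) (hf : ContDiff ℝ (⊤ : ℕ∞) f)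
    (s : Set (EuclideanSpace ℝ (Fin n))) (hs : Convex ℝ s)
    (hc : IsCompact s) : ∃ L : NNReal, LipschitzOnWith L (gradient f) s := by
  have h1 : ContDiff ℝ (⊤ : ℕ∞) (gradient f) := grad_contDiff f hf
  have h2 : Continuous (fderiv ℝ (gradient f)) := (h1.fderiv_right (m := (⊤ : ℕ∞)) (mod_cast le_top)).continuous
  obtain ⟨C, hC⟩ := hc.exists_bound_of_continuousOn h2.continuousOn
  refine ⟨⟨max C 0, le_max_right _ _⟩, hs.lipschitzOnWith_of_nnnorm_hasFDerivWithin_le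
    (f' := fun x => fderiv ℝ (gradient f) x)
    (fun x hx => ((h1.differentiable (by simp)).differentiableAt.hasFDerivAt).hasFDerivWithinAt)
    (fun x hx => ?_)⟩
  show ‖fderiv ℝ (gradient f) x‖ ≤ max C 0
  exact le_trans (hC x hx) (le_max_left _ _)

theorem fderiv_eq_toDual_grad {n : ℕ} (f : EuclideanSpace ℝ (Fin n) → ℝ)
    (x : EuclideanSpace ℝ (Fin n)) :
    fderiv ℝ f x = InnerProductSpace.toDual ℝ (EuclideanSpace ℝ (Fin n)) (gradient f x) := by
  simp [gradient]

theorem descent {n : ℕ} (f : EuclideanSpace ℝ (Fin n) → ℝ) (hf : Differentiable ℝ f)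
    {s : Set (EuclideanSpace ℝ (Fin n))}
    (hs : Convex ℝ s) {L : NNReal} (hL : LipschitzOnWith L (gradient f) s)
    {a b : EuclideanSpace ℝ (Fin n)} (ha : a ∈ s) (hb : b ∈ s) :
    f b ≤ f a + ⟪gradient f a, b - a⟫ + L * ‖b - a‖ ^ 2 := by
  set D := (InnerProductSpace.toDual ℝ (EuclideanSpace ℝ (Fin n))) (gradient f a)
  have hseg : segment ℝ a b ⊆ s := hs.segment_subset ha hb
  have key : ‖(f b - D b) - (f a - D a)‖ ≤ (L * ‖b - a‖) * ‖b - a‖ := by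
    apply (convex_segment a b).norm_image_sub_le_of_norm_hasFDerivWithin_le
      (f' := fun w => fderiv ℝ f w - D)
      (fun w hw => (((hf w).hasFDerivAt).sub (D.hasFDerivAt)).hasFDerivWithinAt)
      (fun w hw => ?_) (left_mem_segment ℝ a b) (right_mem_segment ℝ a b)
    have h1 : fderiv ℝ f w - D
        = InnerProductSpace.toDual ℝ (EuclideanSpace ℝ (Fin n)) (gradient f w - gradient f a) := by
      rw [map_sub]; rw [fderiv_eq_toDual_grad]
    have h2 : ‖gradient f w - gradient f a‖ ≤ L * ‖w - a‖ := hL.norm_sub_le (hseg hw) ha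
    have h3 : ‖w - a‖ ≤ ‖b - a‖ := by
      obtain ⟨t, u, ht, hu, htu, rfl⟩ := hw
      have hteq : t = 1 - u := by linarith
      subst hteq
      have : (1 - u) • a + u • b - a = u • (b - a) := by module
      rw [this, norm_smul]
      calc ‖u‖ * ‖b - a‖ ≤ 1 * ‖b - a‖ := by
            apply mul_le_mul_of_nonneg_right _ (norm_nonneg _)
            rw [Real.norm_eq_abs, abs_of_nonneg hu]; linarith
        _ = ‖b - a‖ := one_mul _
    show ‖fderiv ℝ f w - D‖ ≤ L * ‖b - a‖
    rw [h1]
    calc ‖(InnerProductSpace.toDual ℝ (EuclideanSpace ℝ (Fin n))) (gradient f w - gradient f a)‖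
        = ‖gradient f w - gradient f a‖ := (InnerProductSpace.toDual ℝ _).norm_map _
      _ ≤ L * ‖w - a‖ := h2
      _ ≤ L * ‖b - a‖ := mul_le_mul_of_nonneg_left h3 (by positivity)
  have hD : D b - D a = ⟪gradient f a, b - a⟫ := by
    rw [← map_sub]; exact InnerProductSpace.toDual_apply_apply ..
  have := (abs_le.mp (by simpa [Real.norm_eq_abs] using key)).2
  nlinarith [this, hD, sq_abs (‖b - a‖)]

theorem coercive_bound {n : ℕ} {f : EuclideanSpace ℝ (Fin n) → ℝ}
    (hcoer : Filter.Tendsto f (Filter.comap (fun x => ‖x‖) Filter.atTop) Filter.atTop)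
    (C : ℝ) : ∃ R : ℝ, 0 ≤ R ∧ ∀ x, R ≤ ‖x‖ → C ≤ f x := by
  have h : ∀ᶠ x in Filter.comap (fun x : EuclideanSpace ℝ (Fin n) => ‖x‖) Filter.atTop,
      C ≤ f x := hcoer.eventually (eventually_ge_atTop C)
  rw [Filter.eventually_comap] at h
  obtain ⟨R, hR⟩ := Filter.eventually_atTop.mp h
  exact ⟨max R 0, le_max_right _ _, fun x hx =>
    hR ‖x‖ (le_trans (le_max_left _ _) hx) x rfl⟩

theorem bddBelow_of_coercive {n : ℕ} {f : EuclideanSpace ℝ (Fin n) → ℝ}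
    (hf : Continuous f)
    (hcoer : Filter.Tendsto f (Filter.comap (fun x => ‖x‖) Filter.atTop) Filter.atTop) :
    ∃ m : ℝ, ∀ x, m ≤ f x := by
  obtain ⟨R, hR0, hR⟩ := coercive_bound hcoer 0
  have hcpt : IsCompact (closedBall (0 : EuclideanSpace ℝ (Fin n)) R) :=
    isCompact_closedBall _ _
  obtain ⟨z, hz, hmin⟩ := hcpt.exists_isMinOn ⟨0, mem_closedBall_self hR0⟩ hf.continuousOn
  refine ⟨min (f z) 0, fun x => ?_⟩
  by_cases hx : ‖x‖ ≤ R
  · exact le_trans (min_le_left _ _) (hmin (by simpa [mem_closedBall, dist_eq_norm] using hx))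
  · exact le_trans (min_le_right _ _) (hR x (le_of_not_ge hx))

theorem key_ineq (a A J Lr u v F0 F1 I : ℝ) (hα : 0 < a) (hA0 : 0 ≤ A)
    (hL : 1 ≤ Lr) (hJ : 0 ≤ J) (hu : 0 ≤ u) (hv : 0 ≤ v)
    (hαβ : a * (2 * Lr * (2 + J) + 1) ≤ 1 - A)
    (hcomb : F1 ≤ F0 + I + Lr * J * u * v + Lr * v ^ 2)
    (h2 : a * I ≤ A * u * v - v ^ 2) :
    a * F1 + (A / 2 + a * (Lr * (1 + J) / 2)) * v ^ 2 + a * v ^ 2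
      ≤ a * F0 + (A / 2 + a * (Lr * (1 + J) / 2)) * u ^ 2 := by
  have hd := mul_le_mul_of_nonneg_left hcomb hα.le
  nlinarith [mul_nonneg hA0 (sq_nonneg (u - v)),
    mul_nonneg (mul_nonneg hα.le (by linarith : (0:ℝ) ≤ Lr)) (sq_nonneg (u - v)),
    mul_nonneg (mul_nonneg (mul_nonneg hα.le (by linarith : (0:ℝ) ≤ Lr)) hJ) (sq_nonneg (u - v)),
    mul_le_mul_of_nonneg_right hαβ (sq_nonneg v),
    mul_nonneg (mul_nonneg hα.le (by linarith : (0:ℝ) ≤ Lr)) (sq_nonneg u),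
    mul_nonneg (mul_nonneg hα.le (by linarith : (0:ℝ) ≤ Lr)) (sq_nonneg v),
    mul_nonneg (mul_nonneg (mul_nonneg hα.le (by linarith : (0:ℝ) ≤ Lr)) hJ) (sq_nonneg v)]

/-- `f` is the evaluation of a real multivariate polynomial in `n` variables. -/
def IsPolynomialFun {n : ℕ} (f : EuclideanSpace ℝ (Fin n) → ℝ) : Prop :=
  ∃ p : MvPolynomial (Fin n) ℝ, ∀ x, f x = MvPolynomial.eval x p

/-- `f(x) → ∞` as `‖x‖ → ∞`. -/
def Coercive {n : ℕ} (f : EuclideanSpace ℝ (Fin n) → ℝ) : Prop :=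
  Filter.Tendsto f (Filter.comap (fun x => ‖x‖) Filter.atTop) Filter.atTop

/-- A gradient-method-with-momentum trajectory `(x_k)_{k ≥ -1}` of `f` with step size `α`
and parameters `β, γ, δ`: `‖x₋₁ - x₀‖ ≤ δα` and for all `k ∈ ℕ`,
`x_{k+1} = x_k + β (x_k - x_{k-1}) - α ∇f(y_k)` with `y_k = x_k + γ (x_k - x_{k-1})`. -/
def IsMomentumTraj {n : ℕ} (f : EuclideanSpace ℝ (Fin n) → ℝ) (α β γ δ : ℝ)
    (x : ℤ → EuclideanSpace ℝ (Fin n)) : Prop :=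
  ‖x (-1) - x 0‖ ≤ δ * α ∧
  ∀ k : ℕ, x ((k : ℤ) + 1) = x (k : ℤ) + β • (x (k : ℤ) - x ((k : ℤ) - 1))
    - α • gradient f (x (k : ℤ) + γ • (x (k : ℤ) - x ((k : ℤ) - 1)))

set_option maxHeartbeats 4000000 in
theorem stmt_2 {n : ℕ} (f : EuclideanSpace ℝ (Fin n) → ℝ)
    (hpoly : IsPolynomialFun f) (hcoer : Coercive f)
    (β γ δ : ℝ) (hβ : β ∈ Set.Ioo (-1 : ℝ) 1) (hδ : 0 < δ)
    (X₀ : Set (EuclideanSpace ℝ (Fin n))) (hX₀ : Bornology.IsBounded X₀)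
    (ε : ℝ) (hε : 0 < ε) :
    ∃ ᾱ Δ : ℝ, 0 < ᾱ ∧ 0 < Δ ∧
      ∀ α : ℝ, 0 < α → α ≤ ᾱ →
        ∀ x : ℤ → EuclideanSpace ℝ (Fin n), IsMomentumTraj f α β γ δ x → x 0 ∈ X₀ →
          (∀ k : ℕ, f (x (k : ℤ)) ≤ Δ) ∧
          ∃ fstar : ℝ, (∃ z, gradient f z = 0 ∧ f z = fstar) ∧
            ∃ k₀ : ℕ, ∀ k : ℕ, k₀ ≤ k → |f (x (k : ℤ)) - fstar| ≤ ε := by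
  classical
  obtain ⟨p, hp⟩ := hpoly
  have hfs : ContDiff ℝ (⊤ : ℕ∞) f := by
    have : f = fun x : EuclideanSpace ℝ (Fin n) => MvPolynomial.eval x p := funext hp
    rw [this]; exact mv_contDiff p
  have hfc : Continuous f := hfs.continuous
  have hfd : Differentiable ℝ f := hfs.differentiable (by simp)
  have hgc : Continuous (gradient f) := (grad_contDiff f hfs).continuous
  have hβ' : |β| < 1 := abs_lt.mpr ⟨hβ.1, hβ.2⟩
  obtain ⟨m, hm⟩ := bddBelow_of_coercive hfc hcoer
  -- bounded initial set
  obtain ⟨r₀, hr₀⟩ := hX₀.subset_closedBall 0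
  set R₀ : ℝ := max r₀ 0 with hR₀def
  have hR₀0 : 0 ≤ R₀ := le_max_right _ _
  have hX₀R : X₀ ⊆ closedBall 0 R₀ :=
    hr₀.trans (closedBall_subset_closedBall (le_max_left _ _))
  -- max of f on initial ball
  obtain ⟨zB, hzB, hBmax⟩ := (isCompact_closedBall (0 : EuclideanSpace ℝ (Fin n)) R₀).exists_isMaxOn
    ⟨0, mem_closedBall_self hR₀0⟩ hfc.continuousOn
  set B : ℝ := f zB with hBdef
  set Δ : ℝ := max B 0 + 1 with hΔdef
  have hΔpos : 0 < Δ := by positivity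
  have hmΔ : m ≤ Δ := le_trans (hm zB) (by simp [hΔdef]; linarith [le_max_left B (0:ℝ)])
  -- sublevel set bounded
  obtain ⟨R₁, hR₁0, hR₁⟩ := coercive_bound hcoer (Δ + 1)
  have hsub : ∀ w : EuclideanSpace ℝ (Fin n), f w ≤ Δ → w ∈ closedBall (0 : EuclideanSpace ℝ (Fin n)) R₁ := by
    intro w hw
    by_contra hcon
    have : R₁ ≤ ‖w‖ := by
      simp only [mem_closedBall, dist_eq_norm, sub_zero, not_le] at hcon
      exact le_of_lt hcon
    linarith [hR₁ w this]
  -- constants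
  set u₀ : ℝ := Real.sqrt (2 * (Δ - m)) with hu₀def
  have hu₀0 : 0 ≤ u₀ := Real.sqrt_nonneg _
  set D : ℝ := (1 + |γ|) * u₀ + 1 with hDdef
  have hD1 : 1 ≤ D := by nlinarith [abs_nonneg γ]
  set K : Set (EuclideanSpace ℝ (Fin n)) := closedBall 0 (R₁ + D) with hKdef
  obtain ⟨L₀, hL₀⟩ := grad_lip f hfs K (convex_closedBall _ _) (isCompact_closedBall _ _)
  set L : NNReal := max L₀ 1 with hLdef
  have hL : LipschitzOnWith L (gradient f) K := fun a ha b hb =>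
    le_trans (hL₀ ha hb) (mul_le_mul_left (ENNReal.coe_le_coe.mpr (le_max_left L₀ 1)) _)
  have hL1 : (1:ℝ) ≤ L := by exact_mod_cast le_max_right L₀ 1
  obtain ⟨G, hG⟩ := (isCompact_closedBall (0 : EuclideanSpace ℝ (Fin n)) (R₁ + D)).exists_bound_of_continuousOn hgc.continuousOn
  have hG0 : 0 ≤ G := le_trans (norm_nonneg _)
    (hG 0 (by simp [mem_closedBall]; positivity))
  set M : ℝ := L * (1 + |γ|) / 2 with hMdef
  have hM0 : 0 < M := by positivity
  set ᾱ : ℝ := min (min 1 ((1 - |β|) / (2 * L * (2 + |γ|) + 1)))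
      (min (1 / (δ ^ 2 * (1 + M))) (1 / (G + 1))) with hᾱdef
  have hᾱpos : 0 < ᾱ := by
    apply lt_min (lt_min one_pos (div_pos (by linarith) (by positivity)))
      (lt_min (by positivity) (one_div_pos.mpr (by linarith)))
  clear_value R₀ B Δ u₀ D K L M ᾱ
  refine ⟨ᾱ, Δ, hᾱpos, hΔpos, ?_⟩
  intro α hα hαᾱ x htraj hx0
  have hαᾱ' := hαᾱ
  rw [hᾱdef] at hαᾱ'
  have hα1 : α ≤ 1 := hαᾱ'.trans (le_trans (min_le_left _ _) (min_le_left _ _))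
  have hαβ : α * (2 * L * (2 + |γ|) + 1) ≤ 1 - |β| := by
    have h := hαᾱ'.trans (le_trans (min_le_left _ _) (min_le_right _ _))
    rw [le_div_iff₀ (by positivity)] at h
    linarith
  have hαδ : α * (δ ^ 2 * (1 + M)) ≤ 1 := by
    have h := hαᾱ'.trans (le_trans (min_le_right _ _) (min_le_left _ _))
    rw [le_div_iff₀ (by positivity)] at h
    linarith
  have hαG : α * G ≤ 1 := by
    have h := hαᾱ'.trans (le_trans (min_le_right _ _) (min_le_right _ _))
    rw [le_div_iff₀ (by linarith)] at h
    nlinarith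
  -- sequence definitions
  set X : ℕ → EuclideanSpace ℝ (Fin n) := fun k => x (k : ℤ) with hXdef
  set d : ℕ → EuclideanSpace ℝ (Fin n) := fun k => x (k : ℤ) - x ((k : ℤ) - 1) with hddef
  set y : ℕ → EuclideanSpace ℝ (Fin n) := fun k => X k + γ • d k with hydef
  set g : ℕ → EuclideanSpace ℝ (Fin n) := fun k => gradient f (y k) with hgdef
  have hrec : ∀ k : ℕ, X (k + 1) = X k + β • d k - α • g k := by
    intro k
    have h := htraj.2 k
    have hcast : ((k + 1 : ℕ) : ℤ) = (k : ℤ) + 1 := by push_cast; ring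
    simp only [hXdef, hddef, hydef, hgdef, hcast]
    exact h
  have hdsucc : ∀ k : ℕ, d (k + 1) = β • d k - α • g k := by
    intro k
    have h1 : d (k + 1) = X (k + 1) - X k := by
      simp only [hddef, hXdef]
      congr 2
      push_cast; ring
    rw [h1, hrec k]
    abel
  have hd0 : ‖d 0‖ ≤ δ * α := by
    have := htraj.1
    have h1 : d 0 = x 0 - x (-1) := by simp [hddef]
    rw [h1, norm_sub_rev]
    exact this
  set c : ℝ := |β| / (2 * α) + M with hcdef
  have hc0 : 0 < c := by positivity
  set H : ℕ → ℝ := fun k => f (X k) + c * ‖d k‖ ^ 2 with hHdef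
  clear_value X d y g c H
  -- initial bound
  have hH0 : H 0 ≤ Δ := by
    have hfx0 : f (X 0) ≤ B := by
      rw [hXdef, hBdef]
      exact hBmax (hX₀R hx0)
    have hcd : c * ‖d 0‖ ^ 2 ≤ 1 := by
      have h2 : ‖d 0‖ ^ 2 ≤ (δ * α) ^ 2 := by
        apply sq_le_sq' _ hd0
        nlinarith [norm_nonneg (d 0)]
      have h3 : c * ‖d 0‖ ^ 2 ≤ c * (δ * α) ^ 2 := mul_le_mul_of_nonneg_left h2 hc0.le
      have h4 : c * (δ * α) ^ 2 = |β| * δ ^ 2 * α / 2 + M * δ ^ 2 * α ^ 2 := by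
        rw [hcdef]; field_simp
      have h5 : M * δ ^ 2 * α ^ 2 ≤ M * δ ^ 2 * α := by
        nlinarith [mul_le_mul_of_nonneg_left hα1 (mul_nonneg (mul_nonneg hM0.le (sq_nonneg δ)) hα.le)]
      have h6 : |β| * δ ^ 2 * α / 2 + M * δ ^ 2 * α ≤ α * (δ ^ 2 * (1 + M)) := by
        nlinarith [abs_nonneg β, hβ'.le, sq_nonneg δ]
      linarith
    simp only [hHdef, hΔdef]
    have : f (X 0) ≤ max B 0 := le_trans hfx0 (le_max_left _ _)
    linarith
  have hXd : ∀ k : ℕ, X (k + 1) = X k + d (k + 1) := by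
    intro k
    have h1 : d (k + 1) = X (k + 1) - X k := by
      rw [hddef, hXdef]
      show x (((k+1:ℕ):ℤ)) - x (((k+1:ℕ):ℤ) - 1) = x (((k+1:ℕ):ℤ)) - x ((k:ℕ):ℤ)
      congr 2
      push_cast; ring
    rw [h1]; abel
  have hL0' : (0:ℝ) ≤ (L:ℝ) := by linarith
  have hKsub : closedBall (0 : EuclideanSpace ℝ (Fin n)) R₁ ⊆ K := by
    rw [hKdef]
    exact closedBall_subset_closedBall (by linarith)
  -- main descent step
  have hstep : ∀ k : ℕ, H k ≤ Δ → H (k + 1) ≤ H k - ‖d (k + 1)‖ ^ 2 := by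
    intro k hHk
    simp only [hHdef] at hHk ⊢
    have hcd : c * ‖d k‖ ^ 2 ≤ Δ - m := by
      have := hm (X k)
      linarith
    have hfk : f (X k) ≤ Δ := by
      nlinarith [mul_nonneg hc0.le (sq_nonneg ‖d k‖)]
    have hchalf : (1:ℝ)/2 ≤ c := by
      rw [hcdef, hMdef]
      have h1 : 0 ≤ |β| / (2 * α) := by positivity
      nlinarith [abs_nonneg γ]
    have hu : ‖d k‖ ≤ u₀ := by
      rw [hu₀def]
      apply Real.le_sqrt_of_sq_le
      nlinarith [sq_nonneg ‖d k‖]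
    have hxk : X k ∈ K := hKsub (hsub (X k) hfk)
    have hxknorm : ‖X k‖ ≤ R₁ := by
      have := hsub (X k) hfk
      simpa [mem_closedBall, dist_eq_norm] using this
    have hyk : y k ∈ K := by
      rw [hKdef, mem_closedBall, dist_eq_norm, sub_zero, hydef]
      calc ‖X k + γ • d k‖ ≤ ‖X k‖ + ‖γ • d k‖ := norm_add_le _ _
        _ = ‖X k‖ + |γ| * ‖d k‖ := by rw [norm_smul, Real.norm_eq_abs]
        _ ≤ R₁ + |γ| * u₀ := by
            have := mul_le_mul_of_nonneg_left hu (abs_nonneg γ)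
            linarith
        _ ≤ R₁ + D := by rw [hDdef]; nlinarith [abs_nonneg γ, hu₀0]
    have hgk : ‖g k‖ ≤ G := by
      rw [hgdef]
      apply hG
      rw [hKdef] at hyk
      exact hyk
    have hdk1 : ‖d (k + 1)‖ ≤ ‖d k‖ + 1 := by
      rw [hdsucc k]
      calc ‖β • d k - α • g k‖ ≤ ‖β • d k‖ + ‖α • g k‖ := norm_sub_le _ _
        _ = |β| * ‖d k‖ + |α| * ‖g k‖ := by rw [norm_smul, norm_smul, Real.norm_eq_abs, Real.norm_eq_abs]
        _ ≤ 1 * ‖d k‖ + α * G := by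
            have h1 := mul_le_mul_of_nonneg_right hβ'.le (norm_nonneg (d k))
            rw [abs_of_pos hα]
            have h2 := mul_le_mul_of_nonneg_left hgk hα.le
            linarith
        _ ≤ ‖d k‖ + 1 := by linarith
    have hxk1 : X (k + 1) ∈ K := by
      rw [hKdef, mem_closedBall, dist_eq_norm, sub_zero, hXd k]
      calc ‖X k + d (k + 1)‖ ≤ ‖X k‖ + ‖d (k + 1)‖ := norm_add_le _ _
        _ ≤ R₁ + (u₀ + 1) := by linarith
        _ ≤ R₁ + D := by rw [hDdef]; nlinarith [abs_nonneg γ, hu₀0]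
    -- descent inequality
    have hdes : f (X (k + 1)) ≤ f (X k) + ⟪gradient f (X k), d (k + 1)⟫ + L * ‖d (k + 1)‖ ^ 2 := by
      have := descent f hfd (convex_closedBall _ _)
        (by rw [hKdef] at hL; exact hL) (by rw [hKdef] at hxk; exact hxk)
        (by rw [hKdef] at hxk1; exact hxk1)
      have hbma : X (k + 1) - X k = d (k + 1) := by rw [hXd k]; abel
      rw [hbma] at this
      exact this
    have hcross : ⟪gradient f (X k) - g k, d (k + 1)⟫ ≤ L * |γ| * ‖d k‖ * ‖d (k + 1)‖ := by
      have h1 : ‖gradient f (X k) - g k‖ ≤ L * (|γ| * ‖d k‖) := by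
        have h2 := hL.norm_sub_le hxk hyk
        have h3 : ‖X k - y k‖ = |γ| * ‖d k‖ := by
          rw [hydef]
          have : X k - (X k + γ • d k) = -(γ • d k) := by abel
          rw [this, norm_neg, norm_smul, Real.norm_eq_abs]
        rw [hgdef]
        calc ‖gradient f (X k) - gradient f (y k)‖ ≤ L * ‖X k - y k‖ := h2
          _ = L * (|γ| * ‖d k‖) := by rw [h3]
      calc ⟪gradient f (X k) - g k, d (k + 1)⟫
          ≤ ‖gradient f (X k) - g k‖ * ‖d (k + 1)‖ := real_inner_le_norm _ _
        _ ≤ (L * (|γ| * ‖d k‖)) * ‖d (k + 1)‖ :=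
            mul_le_mul_of_nonneg_right h1 (norm_nonneg _)
        _ = L * |γ| * ‖d k‖ * ‖d (k + 1)‖ := by ring
    have hcomb : f (X (k + 1)) ≤ f (X k) + ⟪g k, d (k + 1)⟫
        + L * |γ| * ‖d k‖ * ‖d (k + 1)‖ + L * ‖d (k + 1)‖ ^ 2 := by
      have hsplit : ⟪gradient f (X k), d (k + 1)⟫
          = ⟪g k, d (k + 1)⟫ + ⟪gradient f (X k) - g k, d (k + 1)⟫ := by
        rw [inner_sub_left]; ring
      rw [hsplit] at hdes
      linarith
    have h2' : α * ⟪g k, d (k + 1)⟫ ≤ |β| * ‖d k‖ * ‖d (k + 1)‖ - ‖d (k + 1)‖ ^ 2 := by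
      have heq : α • g k = β • d k - d (k + 1) := by rw [hdsucc k]; abel
      have h3 : α * ⟪g k, d (k + 1)⟫ = β * ⟪d k, d (k + 1)⟫ - ‖d (k + 1)‖ ^ 2 := by
        rw [← real_inner_smul_left, heq, inner_sub_left, real_inner_smul_left,
          real_inner_self_eq_norm_sq]
      rw [h3]
      have h4 : β * ⟪d k, d (k + 1)⟫ ≤ |β| * ‖d k‖ * ‖d (k + 1)‖ := by
        calc β * ⟪d k, d (k + 1)⟫ ≤ |β * ⟪d k, d (k + 1)⟫| := le_abs_self _
          _ = |β| * |⟪d k, d (k + 1)⟫| := abs_mul _ _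
          _ ≤ |β| * (‖d k‖ * ‖d (k + 1)‖) :=
              mul_le_mul_of_nonneg_left (abs_real_inner_le_norm _ _) (abs_nonneg β)
          _ = |β| * ‖d k‖ * ‖d (k + 1)‖ := by ring
      linarith
    have hαc : α * c = |β| / 2 + α * ((L : ℝ) * (1 + |γ|) / 2) := by
      rw [hcdef, hMdef]
      field_simp
    have key := key_ineq α |β| |γ| (L : ℝ) ‖d k‖ ‖d (k + 1)‖ (f (X k)) (f (X (k + 1)))
      ⟪g k, d (k + 1)⟫ hα (abs_nonneg β) hL1 (abs_nonneg γ) (norm_nonneg _) (norm_nonneg _)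
      hαβ hcomb h2'
    rw [← hαc] at key
    have final : α * (f (X (k + 1)) + c * ‖d (k + 1)‖ ^ 2)
        ≤ α * (f (X k) + c * ‖d k‖ ^ 2 - ‖d (k + 1)‖ ^ 2) := by
      have e1 : α * (f (X (k + 1)) + c * ‖d (k + 1)‖ ^ 2)
          = α * f (X (k + 1)) + (α * c) * ‖d (k + 1)‖ ^ 2 := by ring
      have e2 : α * (f (X k) + c * ‖d k‖ ^ 2 - ‖d (k + 1)‖ ^ 2)
          = α * f (X k) + (α * c) * ‖d k‖ ^ 2 - α * ‖d (k + 1)‖ ^ 2 := by ring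
      rw [e1, e2]
      linarith [key]
    exact le_of_mul_le_mul_left final hα
  have hHmono : ∀ k : ℕ, H k ≤ Δ ∧ H (k + 1) ≤ H k - ‖d (k + 1)‖ ^ 2 := by
    intro k
    induction k with
    | zero => exact ⟨hH0, hstep 0 hH0⟩
    | succ j ih =>
        have h1 : H (j + 1) ≤ Δ := le_trans ih.2 (by nlinarith [sq_nonneg ‖d (j+1)‖, ih.1])
        exact ⟨h1, hstep (j + 1) h1⟩
  have hfXΔ : ∀ k : ℕ, f (X k) ≤ Δ := by
    intro k
    have := (hHmono k).1
    simp only [hHdef] at this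
    nlinarith [sq_nonneg ‖d k‖]
  refine ⟨fun k => by have h := hfXΔ k; rw [hXdef] at h; exact h, ?_⟩
  -- convergence analysis
  have hanti : ∀ k : ℕ, H (k + 1) ≤ H k := fun k =>
    le_trans (hHmono k).2 (by nlinarith [sq_nonneg ‖d (k + 1)‖])
  have hlow : ∀ k : ℕ, m ≤ H k := by
    intro k
    simp only [hHdef]
    nlinarith [hm (X k), mul_nonneg hc0.le (sq_nonneg ‖d k‖)]
  have hbdd : BddBelow (Set.range H) := ⟨m, by rintro _ ⟨k, rfl⟩; exact hlow k⟩
  have hHstar : Tendsto H atTop (𝓝 (⨅ k, H k)) :=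
    tendsto_atTop_ciInf (antitone_nat_of_succ_le hanti) hbdd
  set Hstar : ℝ := ⨅ k, H k with hHstardef
  have hshift : Tendsto (fun k => H (k + 1)) atTop (𝓝 Hstar) :=
    hHstar.comp (tendsto_add_atTop_nat 1)
  have hv0 : Tendsto (fun k => ‖d (k + 1)‖ ^ 2) atTop (𝓝 0) := by
    have hdiff : Tendsto (fun k => H k - H (k + 1)) atTop (𝓝 0) := by
      have := hHstar.sub hshift
      simpa using this
    exact squeeze_zero (fun k => sq_nonneg _) (fun k => by linarith [(hHmono k).2]) hdiff
  have hd1norm : Tendsto (fun k => ‖d (k + 1)‖) atTop (𝓝 0) := by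
    have h1 : Tendsto (fun k => Real.sqrt (‖d (k + 1)‖ ^ 2)) atTop (𝓝 (Real.sqrt 0)) :=
      (Real.continuous_sqrt.tendsto 0).comp hv0
    rw [Real.sqrt_zero] at h1
    apply h1.congr
    intro k
    exact Real.sqrt_sq (norm_nonneg _)
  have hdnorm : Tendsto (fun k => ‖d k‖) atTop (𝓝 0) :=
    (tendsto_add_atTop_iff_nat 1).mp hd1norm
  have hdvec : Tendsto d atTop (𝓝 0) := by
    rw [tendsto_zero_iff_norm_tendsto_zero]
    exact hdnorm
  have hsq : Tendsto (fun k => c * ‖d k‖ ^ 2) atTop (𝓝 0) := by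
    have h1 : Tendsto (fun k => ‖d k‖ * ‖d k‖) atTop (𝓝 0) := by
      simpa using hdnorm.mul hdnorm
    have h2 : Tendsto (fun k => ‖d k‖ ^ 2) atTop (𝓝 0) := by
      apply h1.congr; intro k; rw [sq]
    simpa using h2.const_mul c
  have hfX : Tendsto (fun k => f (X k)) atTop (𝓝 Hstar) := by
    have h1 : Tendsto (fun k => H k - c * ‖d k‖ ^ 2) atTop (𝓝 Hstar) := by
      simpa using hHstar.sub hsq
    apply h1.congr
    intro k
    simp only [hHdef]
    ring
  have hg0 : Tendsto g atTop (𝓝 0) := by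
    have hd1vec : Tendsto (fun k => d (k + 1)) atTop (𝓝 0) :=
      hdvec.comp (tendsto_add_atTop_nat 1)
    have h1 : Tendsto (fun k => β • d k - d (k + 1)) atTop (𝓝 0) := by
      simpa using (hdvec.const_smul β).sub hd1vec
    have h2 : Tendsto (fun k => α⁻¹ • (β • d k - d (k + 1))) atTop (𝓝 0) := by
      simpa using h1.const_smul α⁻¹
    apply h2.congr
    intro k
    have heq : β • d k - d (k + 1) = α • g k := by rw [hdsucc k]; abel
    rw [heq, smul_smul, inv_mul_cancel₀ (ne_of_gt hα), one_smul]
  have hXin : ∀ k : ℕ, X k ∈ closedBall (0 : EuclideanSpace ℝ (Fin n)) R₁ :=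
    fun k => hsub (X k) (hfXΔ k)
  obtain ⟨z, hzmem, φ, hφmono, hφtend⟩ :=
    tendsto_subseq_of_bounded (isBounded_closedBall (x := (0 : EuclideanSpace ℝ (Fin n))) (r := R₁)) hXin
  have hφatTop : Tendsto φ atTop atTop := hφmono.tendsto_atTop
  have hyz : Tendsto (fun j => y (φ j)) atTop (𝓝 z) := by
    have h1 : Tendsto (fun j => X (φ j) + γ • d (φ j)) atTop (𝓝 (z + γ • 0)) :=
      hφtend.add ((hdvec.comp hφatTop).const_smul γ)
    rw [smul_zero, add_zero] at h1
    apply h1.congr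
    intro j
    rw [hydef]
  have hgz : Tendsto (fun j => g (φ j)) atTop (𝓝 (gradient f z)) := by
    have := (hgc.tendsto z).comp hyz
    apply this.congr
    intro j
    rw [hgdef]
    rfl
  have hgz0 : gradient f z = 0 :=
    tendsto_nhds_unique hgz (hg0.comp hφatTop)
  have hfz : f z = Hstar :=
    tendsto_nhds_unique ((hfc.tendsto z).comp hφtend) (hfX.comp hφatTop)
  refine ⟨f z, ⟨z, hgz0, rfl⟩, ?_⟩
  obtain ⟨k₀, hk₀⟩ := Metric.tendsto_atTop.mp hfX ε hε
  refine ⟨k₀, fun k hk => ?_⟩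
  have h1 := hk₀ k hk
  rw [Real.dist_eq] at h1
  have h2 : f (x (k : ℤ)) = f (X k) := by rw [hXdef]
  rw [h2, hfz]
  exact le_of_lt h1
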